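/- arXiv:1703.00335 — 2 statements merged into one kernel-verified Lean document; each statement's English description precedes it below -/
import Mathlib

section
/- Let A and B be types, and let X := A × FreeGroup (A ⊕ B). Define a binary operation on X by (c, z) ◃ (a, w) := (a, w * z⁻¹ * FreeGroup.of (Sum.inl c) * z) (in the paper's right-action notation, (a^w) ▷ (c^z) = a^{w z⁻¹ c z}). Then this operation makes X into a rack: for each (c, z) the map (a, w) ↦ (c, z) ◃ (a, w) is a bijection of X, with inverse (a, w) ↦ (a, w * z⁻¹ * (FreeGroup.of (Sum.inl c))⁻¹ * z), and the left self-distributive law p ◃ (q ◃ r) = (p ◃ q) ◃ (p ◃ r) holds. -/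
/-- The operation of the extended free rack `FR(A,B)` on the set
`A × FreeGroup (A ⊕ B)`: `(c, z) ◃ (a, w) = (a, w * z⁻¹ * c * z)`
(the paper's `(a^w) ▷ (c^z) = a^{w z⁻¹ c z}`). -/
def extFreeRackAct (A B : Type*) (p q : A × FreeGroup (A ⊕ B)) :
    A × FreeGroup (A ⊕ B) :=
  (q.1, q.2 * p.2⁻¹ * FreeGroup.of (Sum.inl p.1) * p.2)

/-- The candidate inverse operation of the extended free rack. -/
def extFreeRackInvAct (A B : Type*) (p q : A × FreeGroup (A ⊕ B)) :
    A × FreeGroup (A ⊕ B) :=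
  (q.1, q.2 * p.2⁻¹ * (FreeGroup.of (Sum.inl p.1))⁻¹ * p.2)

theorem extended_free_rack_is_rack (A B : Type*) :
    (∀ p : A × FreeGroup (A ⊕ B),
        Function.LeftInverse (extFreeRackInvAct A B p) (extFreeRackAct A B p) ∧
        Function.RightInverse (extFreeRackInvAct A B p) (extFreeRackAct A B p) ∧
        Function.Bijective (extFreeRackAct A B p)) ∧
      (∀ p q r : A × FreeGroup (A ⊕ B),
        extFreeRackAct A B p (extFreeRackAct A B q r) =
          extFreeRackAct A B (extFreeRackAct A B p q) (extFreeRackAct A B p r)) := by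
  constructor
  · intro p
    have hl : Function.LeftInverse (extFreeRackInvAct A B p) (extFreeRackAct A B p) := by
      intro q
      simp [extFreeRackAct, extFreeRackInvAct, mul_assoc]
    have hr : Function.RightInverse (extFreeRackInvAct A B p) (extFreeRackAct A B p) := by
      intro q
      simp [extFreeRackAct, extFreeRackInvAct, mul_assoc]
    exact ⟨hl, hr, hl.injective, hr.surjective⟩
  · intro p q r
    simp only [extFreeRackAct, Prod.mk.injEq, mul_inv_rev, inv_inv]
    refine ⟨trivial, by group⟩
end

section
/- Let R and X be racks, f : R → X a map satisfying f (a ◃ b) = f a ◃ f b for all a, b ∈ R, l : List (R × Bool), and F : R → R defined by F x = l.foldr (fun p y => if p.2 then p.1 ◃ y else p.1 ◃⁻¹ y) x. Let p ≥ 1 be a natural number and A : R → R a map whose p-th iterate equals F (A^[p] = F). Then for any z, w ∈ R: if f (A^[k] z) = f (A^[k] w) for every k with 0 ≤ k ≤ p − 1, then f (A^[k] z) = f (A^[k] w) for every natural number k. -/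
open Quandles

theorem hom_eq_on_iterates (R X : Type*) [Rack R] [Rack X]
    (f : R → X) (hf : ∀ a b : R, f (a ◃ b) = f a ◃ f b)
    (l : List (R × Bool)) (F : R → R)
    (hF : ∀ x : R, F x = l.foldr (fun p y => if p.2 then p.1 ◃ y else p.1 ◃⁻¹ y) x)
    (p : ℕ) (hp : 1 ≤ p) (A : R → R) (hA : A^[p] = F) (z w : R)
    (h : ∀ k : ℕ, k ≤ p - 1 → f (A^[k] z) = f (A^[k] w)) :
    ∀ k : ℕ, f (A^[k] z) = f (A^[k] w) := by
  have hfinv : ∀ a b : R, f (a ◃⁻¹ b) = f a ◃⁻¹ f b := by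
    intro a b
    have := hf a (a ◃⁻¹ b)
    rw [Rack.act_invAct_eq] at this
    rw [← Rack.left_cancel (f a), Rack.act_invAct_eq, ← this]
  have hfold : ∀ (t : List (R × Bool)) (x y : R), f x = f y →
      f (t.foldr (fun p y => if p.2 then p.1 ◃ y else p.1 ◃⁻¹ y) x)
        = f (t.foldr (fun p y => if p.2 then p.1 ◃ y else p.1 ◃⁻¹ y) y) := by
    intro t
    induction t with
    | nil => exact fun x y hxy => hxy
    | cons c t ih =>
      intro x y hxy
      simp only [List.foldr_cons]
      by_cases hb : c.2 <;> simp [hb, hf, hfinv, ih x y hxy]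
  have hFcong : ∀ x y : R, f x = f y → f (F x) = f (F y) := by
    intro x y hxy; rw [hF, hF]; exact hfold l x y hxy
  have key : ∀ q k : ℕ, k ≤ p - 1 → f (F^[q] (A^[k] z)) = f (F^[q] (A^[k] w)) := by
    intro q
    induction q with
    | zero => exact h
    | succ n ih =>
      intro k hk
      rw [Function.iterate_succ_apply', Function.iterate_succ_apply']
      exact hFcong _ _ (ih k hk)
  intro k
  obtain ⟨q, r, hr, rfl⟩ : ∃ q r, r < p ∧ k = q * p + r :=
    ⟨k / p, k % p, Nat.mod_lt _ hp, by rw [Nat.div_add_mod' k p]⟩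
  have : A^[q * p + r] = F^[q] ∘ A^[r] := by
    rw [Function.iterate_add, Nat.mul_comm, Function.iterate_mul, hA]
  rw [this]
  exact key q r (Nat.le_sub_one_of_lt hr)
end
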